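/- arXiv:1612.03607 — 3 statements merged into one kernel-verified Lean document; each statement's English description precedes it below -/
import Mathlib

section
/- Let D be a digraph, s a vertex of D such that every vertex of D is reachable from s, let B_s be the diblock of s in D, and let T be an out-tree in D with ℓ leaves whose root r lies in B_s. Then D contains an out-tree rooted at s with at least (ℓ-1)/2 leaves. -/
namespace CutPaper

variable {V : Type*}

/-- A directed path in the digraph `A`, given as a nonempty list of distinct
vertices from `u` to `v` with consecutive vertices joined by arcs. -/
def IsPath (A : V → V → Prop) (p : List V) (u v : V) : Prop :=
  p.Chain' A ∧ p.head? = some u ∧ p.getLast? = some v ∧ p.Nodup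

/-- `v` is reachable from `u` in the digraph `A`. -/
def Reaches (A : V → V → Prop) (u v : V) : Prop := ∃ p, IsPath A p u v

/-- Two paths from `r` to `v` are internally disjoint: they share only `r` and `v`. -/
def IntDisj (p q : List V) (r v : V) : Prop :=
  ∀ x, x ∈ p → x ∈ q → x = r ∨ x = v

/-- `v` is bi-reachable from `r`: there are two (distinct) internally
vertex-disjoint paths from `r` to `v`. -/
def BiReachable (A : V → V → Prop) (r v : V) : Prop :=
  ∃ p q, p ≠ q ∧ IsPath A p r v ∧ IsPath A q r v ∧ IntDisj p q r v

/-- The diblock of `r`: bi-reachable vertices together with `r` and its out-neighbours. -/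
def diblock (A : V → V → Prop) (r : V) : Set V :=
  {v | BiReachable A r v} ∪ {r} ∪ {v | A r v}

/-- The subdigraph of `A` induced on a vertex set `S`. -/
def Asub (A : V → V → Prop) (S : Set V) : V → V → Prop :=
  fun u v => A u v ∧ u ∈ S ∧ v ∈ S

/-- The path `p` meets the set `B` for the last time in `x`. -/
def LastTouch (B : Set V) (p : List V) (x : V) : Prop :=
  ∃ p₁ p₂, p = p₁ ++ x :: p₂ ∧ x ∈ B ∧ ∀ y ∈ p₂, y ∉ B

/-- `T` is an out-tree with vertex set `S` and root `r`, as a subdigraph of `A`. -/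
structure IsOutTree (A T : V → V → Prop) (S : Set V) (r : V) : Prop where
  sub : ∀ u v, T u v → A u v
  mem : ∀ u v, T u v → u ∈ S ∧ v ∈ S
  root_mem : r ∈ S
  no_in_root : ∀ u, ¬ T u r
  unique_in : ∀ v ∈ S, v ≠ r → ∃! u, T u v
  reach : ∀ v ∈ S, Reaches T r v

/-- `T` is an in-tree with vertex set `S` and root `r`, as a subdigraph of `A`. -/
def IsInTree (A T : V → V → Prop) (S : Set V) (r : V) : Prop :=
  IsOutTree (fun u v => A v u) (fun u v => T v u) S r

/-- The leaves (vertices of out-degree zero) of an out-tree `T` on vertex set `S`. -/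
def leaves (T : V → V → Prop) (S : Set V) : Set V :=
  {v | v ∈ S ∧ ∀ u, ¬ T v u}

/-- The leaves (vertices of in-degree zero) of an in-tree `T` on vertex set `S`. -/
def inLeaves (T : V → V → Prop) (S : Set V) : Set V :=
  {v | v ∈ S ∧ ∀ u, ¬ T u v}

/-- The raw data of a rooted cut decomposition: a node set, a parent map,
and an assignment of diblocks to nodes. -/
structure PreDecomp (V : Type*) where
  N : Set V
  parent : V → V
  B : V → Set V

/-- One step up the decomposition tree rooted at `r`. -/
def Step (d : PreDecomp V) (r : V) (a b : V) : Prop :=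
  a ∈ d.N ∧ a ≠ r ∧ d.parent a = b

/-- `x` is an ancestor (not necessarily proper) of `y` in the decomposition tree. -/
def Anc (d : PreDecomp V) (r : V) (x y : V) : Prop :=
  Relation.ReflTransGen (Step d r) y x

/-- `y` is a child of `x` in the decomposition tree. -/
def IsChild (d : PreDecomp V) (r : V) (y x : V) : Prop :=
  y ∈ d.N ∧ y ≠ r ∧ d.parent y = x

/-- `B*_x`: the union of the diblocks over the subtree rooted at `x`. -/
def Bstar (d : PreDecomp V) (r : V) (x : V) : Set V :=
  {v | ∃ y ∈ d.N, Anc d r x y ∧ v ∈ d.B y}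

/-- The partition class `X_y` of a bottleneck `y` of the diblock of `x`
inside `B*_x`: the vertices below `B x` whose access paths from `x`
leave `B x` for the last time at `y`. -/
def PartClass (A : V → V → Prop) (d : PreDecomp V) (r x y : V) : Set V :=
  {v | v ∈ Bstar d r x ∧ v ∉ d.B x ∧
    ∀ p, IsPath (Asub A (Bstar d r x)) p x v → LastTouch (d.B x) p y}

/-- `d` is the `r`-rooted cut decomposition of the digraph `A`:
the tree is well-founded towards the root `r`, the diblocks cover all vertices,
each `B x` is the diblock of `x` in the subdigraph induced on `B*_x`,
the children of `x` are exactly the bottlenecks of `B x`, and the subtree of a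
child `y` spans exactly `{y}` together with the partition class of `y`. -/
structure IsCutDecomp (A : V → V → Prop) (r : V) (d : PreDecomp V) : Prop where
  root_mem : r ∈ d.N
  parent_mem : ∀ x ∈ d.N, x ≠ r → d.parent x ∈ d.N
  tree : ∀ x ∈ d.N, Anc d r r x
  cover : Bstar d r r = Set.univ
  diblock_eq : ∀ x ∈ d.N, d.B x = diblock (Asub A (Bstar d r x)) x
  child_iff : ∀ x ∈ d.N, ∀ y,
    IsChild d r y x ↔ (y ∈ d.B x ∧ y ≠ x ∧ (PartClass A d r x y).Nonempty)
  child_part : ∀ x ∈ d.N, ∀ y, IsChild d r y x →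
    Bstar d r y = insert y (PartClass A d r x y)

/-! If `r` is bi-reachable from `s`, take two internally disjoint `s`–`r` paths. Prepending a
path `p` to `T` and deleting the arcs of `T` that enter `p` gives an out-tree rooted at `s` that
keeps every leaf of `T` except those on `p` before `r`. Apart from `s`, no vertex lies on both
paths before `r`, so one of them passes through at most `(ℓ + 1) / 2` leaves of `T`, and grafting
it keeps at least `(ℓ - 1) / 2`. If `r` is an out-neighbour of `s`, use the one-arc path `[s, r]`
twice. -/

section Paths

variable {B : V → V → Prop} {p : List V} {u v w : V}

lemma IsPath.start_mem (hp : IsPath B p u v) : u ∈ p :=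
  List.mem_of_mem_head? hp.2.1

lemma IsPath.end_mem (hp : IsPath B p u v) : v ∈ p :=
  List.mem_of_mem_getLast? hp.2.2.1

lemma IsPath.pair (h : B u v) (hne : u ≠ v) : IsPath B [u, v] u v :=
  ⟨List.isChain_pair.mpr h, rfl, rfl, by simpa using hne⟩

lemma IsPath.reaches_of_mem (hp : IsPath B p u w) (hv : v ∈ p) : Reaches B u v := by
  obtain ⟨p₁, p₂, rfl⟩ := List.append_of_mem hv
  obtain ⟨hc, hh, -, hn⟩ := hp
  refine ⟨p₁ ++ [v], hc.prefix ⟨p₂, by simp⟩, ?_, by simp, ?_⟩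
  · cases p₁ <;> simpa using hh
  · exact hn.sublist ((List.cons_sublist_cons.mpr (List.nil_sublist p₂)).append_left p₁)

lemma Reaches.tail (h : Reaches B u v) (e : B v w) : Reaches B u w := by
  obtain ⟨p, hp⟩ := h
  by_cases hw : w ∈ p
  · exact hp.reaches_of_mem hw
  obtain ⟨hc, hh, hl, hn⟩ := hp
  have hne : p ≠ [] := by rintro rfl; simp at hh
  refine ⟨p ++ [w], ?_, by rwa [List.head?_append_of_ne_nil _ hne], by simp, ?_⟩
  · refine List.isChain_append.mpr ⟨hc, List.isChain_singleton w, ?_⟩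
    intro x hx y hy
    simp only [hl, List.head?_cons, Option.mem_def, Option.some.injEq] at hx hy
    exact hx ▸ hy ▸ e
  · exact List.nodup_append.mpr ⟨hn, List.nodup_singleton w,
      fun a ha b hb hab => hw (List.mem_singleton.mp hb ▸ hab ▸ ha)⟩

lemma Reaches.reflTransGen (h : Reaches B u v) : Relation.ReflTransGen B u v := by
  obtain ⟨p, hc, hh, hl, -⟩ := h
  have hne : p ≠ [] := by rintro rfl; simp at hh
  rw [List.head?_eq_some_head hne, Option.some.injEq] at hh
  rw [List.getLast?_eq_getLast_of_ne_nil hne, Option.some.injEq] at hl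
  exact hh ▸ hl ▸ List.relationReflTransGen_of_exists_isChain p hc hne

end Paths

def PathArc (p : List V) (u v : V) : Prop := ∃ i, p[i]? = some u ∧ p[i + 1]? = some v

namespace PathArc

variable {p : List V} {u u' v : V}

lemma mem_left (h : PathArc p u v) : u ∈ p := by
  obtain ⟨i, hu, -⟩ := h; exact List.mem_of_getElem? hu

lemma mem_right (h : PathArc p u v) : v ∈ p := by
  obtain ⟨i, -, hv⟩ := h; exact List.mem_of_getElem? hv

lemma rel {B : V → V → Prop} (hc : p.IsChain B) (h : PathArc p u v) : B u v := by
  obtain ⟨i, hu, hv⟩ := h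
  obtain ⟨h₁, rfl⟩ := List.getElem?_eq_some_iff.mp hu
  obtain ⟨h₂, rfl⟩ := List.getElem?_eq_some_iff.mp hv
  exact List.isChain_iff_getElem.mp hc i h₂

lemma not_to_head (hn : p.Nodup) (hh : p.head? = some v) : ¬ PathArc p u v := by
  rintro ⟨i, -, hv⟩
  have hlen : i + 1 < p.length := (List.getElem?_eq_some_iff.mp hv).1
  have := (List.getElem?_inj hlen hn).mp (hv.trans (List.head?_eq_getElem?.symm.trans hh).symm)
  omega

lemma not_from_last (hn : p.Nodup) (hl : p.getLast? = some u) : ¬ PathArc p u v := by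
  rintro ⟨i, hu, hv⟩
  have hlen : i + 1 < p.length := (List.getElem?_eq_some_iff.mp hv).1
  have hlast : p[p.length - 1]? = some u := List.getLast?_eq_getElem? ▸ hl
  have := (List.getElem?_inj (by omega) hn).mp (hu.trans hlast.symm)
  omega

lemma left_unique (hn : p.Nodup) (h : PathArc p u v) (h' : PathArc p u' v) : u = u' := by
  obtain ⟨i, hu, hv⟩ := h
  obtain ⟨j, hu', hv'⟩ := h'
  have hlen : i + 1 < p.length := (List.getElem?_eq_some_iff.mp hv).1
  obtain rfl : i = j := by
    have := (List.getElem?_inj hlen hn).mp (hv.trans hv'.symm)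
    omega
  exact Option.some.inj (hu.symm.trans hu')

lemma exists_of_mem (hv : v ∈ p) (hh : p.head? ≠ some v) : ∃ u, PathArc p u v := by
  obtain ⟨i, hi, rfl⟩ := List.mem_iff_getElem.mp hv
  cases i with
  | zero => exact absurd (List.head?_eq_getElem?.trans (List.getElem?_eq_getElem hi)) hh
  | succ j => exact ⟨p[j], j, List.getElem?_eq_getElem _, List.getElem?_eq_getElem hi⟩

lemma isChain (p : List V) : p.IsChain (PathArc p) :=
  List.isChain_iff_getElem.mpr fun i h =>
    ⟨i, List.getElem?_eq_getElem _, List.getElem?_eq_getElem h⟩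

end PathArc

def graftPath (p : List V) (T : V → V → Prop) : V → V → Prop :=
  fun u v => PathArc p u v ∨ (T u v ∧ v ∉ p)

section Graft

variable {A T : V → V → Prop} {S : Set V} {r s : V} {p : List V}

lemma IsPath.graftPath (hp : IsPath A p s r) : IsPath (graftPath p T) p s r :=
  ⟨(PathArc.isChain p).imp fun _ _ => Or.inl, hp.2⟩

lemma Reaches.graftPath (hp : IsPath A p s r) {v : V} (h : Reaches T r v) :
    Reaches (graftPath p T) s v := by
  have hrt := h.reflTransGen
  clear h
  induction hrt with
  | refl => exact hp.graftPath.reaches_of_mem hp.end_mem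
  | @tail _ c _ e ih =>
    by_cases hc : c ∈ p
    · exact hp.graftPath.reaches_of_mem hc
    · exact ih.tail (Or.inr ⟨e, hc⟩)

lemma isOutTree_graftPath (hT : IsOutTree A T S r) (hp : IsPath A p s r) :
    IsOutTree A (graftPath p T) (S ∪ {x | x ∈ p}) s where
  sub := by
    rintro u v (h | ⟨h, -⟩)
    exacts [h.rel hp.1, hT.sub u v h]
  mem := by
    rintro u v (h | ⟨h, -⟩)
    exacts [⟨Or.inr h.mem_left, Or.inr h.mem_right⟩,
      ⟨Or.inl (hT.mem u v h).1, Or.inl (hT.mem u v h).2⟩]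
  root_mem := Or.inr hp.start_mem
  no_in_root := by
    rintro u (h | ⟨-, hs⟩)
    exacts [PathArc.not_to_head hp.2.2.2 hp.2.1 h, hs hp.start_mem]
  unique_in := by
    intro v hv hvs
    by_cases hvp : v ∈ p
    · obtain ⟨u, hu⟩ :=
        PathArc.exists_of_mem hvp fun h => hvs (Option.some.inj (h.symm.trans hp.2.1))
      refine ⟨u, Or.inl hu, ?_⟩
      rintro u' (h' | ⟨-, hnp⟩)
      exacts [PathArc.left_unique hp.2.2.2 h' hu, absurd hvp hnp]
    · have hvr : v ≠ r := fun h => hvp (h ▸ hp.end_mem)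
      obtain ⟨u, hu, huniq⟩ := hT.unique_in v (hv.resolve_right hvp) hvr
      refine ⟨u, Or.inr ⟨hu, hvp⟩, ?_⟩
      rintro u' (h' | ⟨h', -⟩)
      exacts [absurd h'.mem_right hvp, huniq u' h']
  reach := by
    rintro v (hv | hv)
    exacts [(hT.reach v hv).graftPath hp, hp.graftPath.reaches_of_mem hv]

lemma leaves_sdiff_subset_leaves_graftPath (hp : IsPath A p s r) :
    leaves T S \ {x | x ∈ p ∧ x ≠ r} ⊆ leaves (graftPath p T) (S ∪ {x | x ∈ p}) := by
  rintro x ⟨⟨hxS, hxleaf⟩, hxp⟩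
  refine ⟨Or.inl hxS, ?_⟩
  rintro u (h | ⟨h, -⟩)
  · obtain rfl : x = r := by_contra fun hxr => hxp ⟨h.mem_left, hxr⟩
    exact PathArc.not_from_last hp.2.2.2 hp.2.2.1 h
  · exact hxleaf u h

lemma ncard_leaves_le_graftPath [Finite V] (hp : IsPath A p s r) :
    (leaves T S).ncard ≤ (leaves (graftPath p T) (S ∪ {x | x ∈ p})).ncard +
      (leaves T S ∩ {x | x ∈ p ∧ x ≠ r}).ncard := by
  have hsub := leaves_sdiff_subset_leaves_graftPath (T := T) (S := S) hp
  calc (leaves T S).ncard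
      ≤ (leaves T S \ (leaves T S ∩ {x | x ∈ p ∧ x ≠ r})).ncard +
          (leaves T S ∩ {x | x ∈ p ∧ x ≠ r}).ncard :=
        Set.ncard_le_ncard_sdiff_add_ncard _ _
    _ ≤ _ := by
      rw [Set.sdiff_self_inter]
      gcongr
      exact Set.toFinite _

end Graft

lemma _root_.Set.ncard_inter_add_ncard_inter_le {α : Type*} [Finite α] (L : Set α)
    {X Y : Set α} {a : α} (h : X ∩ Y ⊆ {a}) :
    (L ∩ X).ncard + (L ∩ Y).ncard ≤ L.ncard + 1 := by
  have hunion : (L ∩ X ∪ L ∩ Y).ncard ≤ L.ncard :=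
    Set.ncard_le_ncard (Set.union_subset Set.inter_subset_left Set.inter_subset_left)
  have hinter : (L ∩ X ∩ (L ∩ Y)).ncard ≤ 1 :=
    calc (L ∩ X ∩ (L ∩ Y)).ncard ≤ ({a} : Set α).ncard :=
          Set.ncard_le_ncard fun x hx => h ⟨hx.1.2, hx.2.2⟩
      _ = 1 := Set.ncard_singleton a
  rw [← Set.ncard_union_add_ncard_inter]
  omega

lemma exists_outTree_of_intDisj [Finite V] {A T : V → V → Prop} {S : Set V} {r s : V}
    {p q : List V} (hT : IsOutTree A T S r) (hp : IsPath A p s r) (hq : IsPath A q s r)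
    (hpq : IntDisj p q s r) :
    ∃ (T' : V → V → Prop) (S' : Set V),
      IsOutTree A T' S' s ∧ ((leaves T S).ncard - 1) / 2 ≤ (leaves T' S').ncard := by
  have hshared := Set.ncard_inter_add_ncard_inter_le (leaves T S)
    (X := {x | x ∈ p ∧ x ≠ r}) (Y := {x | x ∈ q ∧ x ≠ r}) (a := s)
    fun x ⟨⟨hxp, hxr⟩, hxq, _⟩ => (hpq x hxp hxq).resolve_right hxr
  have hp' := ncard_leaves_le_graftPath (T := T) (S := S) hp
  have hq' := ncard_leaves_le_graftPath (T := T) (S := S) hq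
  by_cases hle : (leaves T S ∩ {x | x ∈ p ∧ x ≠ r}).ncard ≤
      (leaves T S ∩ {x | x ∈ q ∧ x ≠ r}).ncard
  · exact ⟨_, _, isOutTree_graftPath hT hp, by omega⟩
  · exact ⟨_, _, isOutTree_graftPath hT hq, by omega⟩

theorem reroot_in_diblock_general {V : Type*} [Fintype V]
    (A : V → V → Prop) (s : V)
    (T : V → V → Prop) (S : Set V) (r : V) (ℓ : ℕ)
    (hT : IsOutTree A T S r) (hr : r ∈ diblock A s)
    (hl : (leaves T S).ncard = ℓ) :
    ∃ (T' : V → V → Prop) (S' : Set V),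
      IsOutTree A T' S' s ∧ (ℓ - 1) / 2 ≤ (leaves T' S').ncard := by
  subst hl
  obtain rfl | hrs := eq_or_ne r s
  · exact ⟨T, S, hT, by omega⟩
  rcases hr with (⟨p, q, -, hp, hq, hpq⟩ | hrs') | hsr
  · exact exists_outTree_of_intDisj hT hp hq hpq
  · exact absurd hrs' hrs
  · have hp : IsPath A [s, r] s r := IsPath.pair hsr hrs.symm
    exact exists_outTree_of_intDisj hT hp hp fun x hx _ => List.mem_pair.mp hx

/-- an out-tree with `ℓ` leaves rooted inside the diblock of `s`
yields an out-tree rooted at `s` with at least `(ℓ-1)/2` leaves. -/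
theorem reroot_in_diblock {V : Type*} [Fintype V]
    (A : V → V → Prop) (s : V) (hreach : ∀ v, Reaches A s v)
    (T : V → V → Prop) (S : Set V) (r : V) (ℓ : ℕ)
    (hT : IsOutTree A T S r) (hr : r ∈ diblock A s)
    (hl : (leaves T S).ncard = ℓ) :
    ∃ (T' : V → V → Prop) (S' : Set V),
      IsOutTree A T' S' s ∧ (ℓ - 1) / 2 ≤ (leaves T' S').ncard :=
  reroot_in_diblock_general A s T S r ℓ hT hr hl

end CutPaper
end

section
/- Let H be a digraph, r a vertex from which every vertex of H is reachable, and v ∈ V(H) \ {r} with v not in the diblock B_r of r. Then there exists a vertex u ∉ {r, v} such that every directed r-v-path in H passes through u. Conversely, if v ∈ B_r \ ({r} ∪ N⁺(r)), then no such cut vertex exists. -/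
/-!
If no vertex other than `r` and `v` meets every `r`-`v`-path and `r → v` is not an arc, there
are two internally disjoint `r`-`v`-paths (Menger's theorem for two paths). Induct on the length
of a path `P₀ ++ [w, v]`: contracting the arc `w → v` into `v` shortens it and creates no cut
vertex, so the contracted digraph has two such paths, and they lift to paths of the original one.
The lifts stay internally disjoint unless both pass through `w`. In that case take a path `R`
avoiding `w`, let `y` be its last vertex on the two lifts, and replace the part of the lift
containing `y` after `y` by the rest of `R`; the other lift still reaches `v` through `w`.
-/

namespace CutPaper

variable {V : Type*}

section Paths

variable {A B : V → V → Prop} {p l₁ l₂ : List V} {a b x y : V}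

lemma isPath_iff :
    IsPath A p a b ↔ p.IsChain A ∧ p.head? = some a ∧ p.getLast? = some b ∧ p.Nodup :=
  Iff.rfl

lemma isPath_append_cons_iff :
    IsPath A (l₁ ++ y :: l₂) a b ↔
      IsPath A (l₁ ++ [y]) a y ∧ IsPath A (y :: l₂) y b ∧ ∀ x ∈ l₁, x ∉ l₂ := by
  rw [isPath_iff, isPath_iff, isPath_iff, List.isChain_split]
  cases l₁ <;> simp [List.nodup_append] <;> grind

lemma isPath_pair_iff : IsPath A [x, y] x y ↔ A x y ∧ x ≠ y := by
  simp [isPath_iff]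

lemma IsPath.start_mem_s5 (h : IsPath A p a b) : a ∈ p :=
  List.mem_of_mem_head? h.2.1

lemma IsPath.end_mem_s5 (h : IsPath A p a b) : b ∈ p :=
  List.mem_of_getLast? h.2.2.1

lemma IsPath.nodup (h : IsPath A p a b) : p.Nodup := h.2.2.2

lemma IsPath.mono_of_mem (h : IsPath A p a b) (hAB : ∀ x ∈ p, ∀ y ∈ p, A x y → B x y) :
    IsPath B p a b :=
  ⟨h.1.imp_of_mem_imp fun x y hx hy => hAB x hx y hy, h.2⟩

lemma IsPath.forall_mem {P : V → Prop} (h : IsPath A p a b) (ha : P a)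
    (hA : ∀ x y, A x y → P y) : ∀ x ∈ p, P x :=
  h.1.induction P p (fun x y hxy _ => hA x y hxy) fun hp => by
    obtain rfl : p.head hp = a := by simpa [List.head?_eq_some_head hp] using h.2.1
    exact ha

lemma IsPath.exists_eq_append_pair (h : IsPath A p a b) (hab : a ≠ b) :
    ∃ l x, p = l ++ [x, b] := by
  obtain ⟨-, hhead, hlast, -⟩ := h
  rcases List.eq_nil_or_concat' p with rfl | ⟨l', b', rfl⟩
  · simp at hhead
  obtain rfl : b' = b := by simpa using hlast
  rcases List.eq_nil_or_concat' l' with rfl | ⟨l, x, rfl⟩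
  · exact absurd (by simpa using hhead) hab.symm
  exact ⟨l, x, by simp⟩

lemma exists_lastTouch {S : Set V} : ∀ {p : List V}, (∃ x ∈ p, x ∈ S) → ∃ x, LastTouch S p x
  | [], h => by simp at h
  | a :: t, h => by
    by_cases ht : ∃ x ∈ t, x ∈ S
    · obtain ⟨x, p₁, p₂, rfl, hx, hp₂⟩ := exists_lastTouch ht
      exact ⟨x, a :: p₁, p₂, rfl, hx, hp₂⟩
    · simp only [not_exists, not_and] at ht
      have ha : a ∈ S := by grind
      exact ⟨a, [], t, rfl, ha, ht⟩

end Paths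

section IntDisjPaths

variable {A : V → V → Prop} {p q p' q' R : List V} {r v w y : V}

/-- Like `BiReachable`, except that the two paths may coincide (which happens only when `r → v`
is an arc). -/
def HasIntDisjPaths (A : V → V → Prop) (r v : V) : Prop :=
  ∃ p q, IsPath A p r v ∧ IsPath A q r v ∧ IntDisj p q r v

lemma hasIntDisjPaths_of_adj (h : A r v) (hrv : r ≠ v) : HasIntDisjPaths A r v :=
  ⟨[r, v], [r, v], isPath_pair_iff.2 ⟨h, hrv⟩, isPath_pair_iff.2 ⟨h, hrv⟩, by simp [IntDisj]⟩

lemma HasIntDisjPaths.biReachable (h : HasIntDisjPaths A r v) (hrv : r ≠ v) (hA : ¬ A r v) :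
    BiReachable A r v := by
  obtain ⟨p, q, hp, hq, hpq⟩ := h
  refine ⟨p, q, ?_, hp, hq, hpq⟩
  rintro rfl
  obtain ⟨l, x, rfl⟩ := hp.exists_eq_append_pair hrv
  obtain ⟨-, hxv, -⟩ := isPath_append_cons_iff.1 hp
  obtain ⟨hxv, hxv'⟩ := isPath_pair_iff.1 hxv
  obtain rfl : x = r := (hpq x (by simp) (by simp)).resolve_right hxv'
  exact hA hxv

lemma IntDisj.of_subset_insert (h : IntDisj p q r v) (hp : ∀ x ∈ p', x ∈ p ∨ x = w)
    (hq : ∀ x ∈ q', x ∈ q ∨ x = w) (hw : w ∉ p' ∨ w ∉ q') : IntDisj p' q' r v := by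
  intro x hxp hxq
  rcases eq_or_ne x w with rfl | hxw
  · exact (hw.elim (· hxp) (· hxq)).elim
  · exact h x ((hp x hxp).resolve_right hxw) ((hq x hxq).resolve_right hxw)

lemma hasIntDisjPaths_of_detour {R₂ : List V} (hp : IsPath A (p ++ [w, v]) r v)
    (hq : IsPath A (q ++ [w, v]) r v) (hpq : ∀ x ∈ p, x ∈ q → x = r) (hy : y ∈ p)
    (hR : IsPath A (y :: R₂) y v) (hR₂ : ∀ x ∈ R₂, x ∉ p ∧ x ∉ q ∧ x ≠ w) :
    HasIntDisjPaths A r v := by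
  obtain ⟨p₁, p₂, rfl⟩ := List.append_of_mem hy
  have hwp : w ∉ p₁ ++ y :: p₂ := by
    have := hp.nodup
    simp only [List.nodup_append] at this
    grind
  rw [show p₁ ++ y :: p₂ ++ [w, v] = p₁ ++ y :: (p₂ ++ [w, v]) by simp] at hp
  refine ⟨p₁ ++ y :: R₂, q ++ [w, v], isPath_append_cons_iff.2
    ⟨(isPath_append_cons_iff.1 hp).1, hR, fun x hx hx' => (hR₂ x hx').1 (by simp [hx])⟩, hq, ?_⟩
  intro x hx hxq
  simp only [List.mem_append, List.mem_cons, List.not_mem_nil, or_false] at hx hxq hwp hpq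
  grind

lemma hasIntDisjPaths_of_reroute (hp : IsPath A (p ++ [w, v]) r v)
    (hq : IsPath A (q ++ [w, v]) r v) (hpq : ∀ x ∈ p, x ∈ q → x = r) (hR : IsPath A R r v)
    (hwR : w ∉ R) : HasIntDisjPaths A r v := by
  have hrp : r ∈ p := by
    rcases p with _ | ⟨a, p⟩
    · obtain rfl : w = r := by simpa [isPath_iff] using hp.2.1
      exact (hwR hR.start_mem_s5).elim
    · obtain rfl : a = r := by simpa [isPath_iff] using hp.2.1
      exact List.mem_cons_self
  obtain ⟨y, R₁, R₂, rfl, hy, hR₂⟩ :=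
    exists_lastTouch (S := {x | x ∈ p ∨ x ∈ q}) ⟨r, hR.start_mem_s5, Or.inl hrp⟩
  have hsuffix := (isPath_append_cons_iff.1 hR).2.1
  have hR₂' : ∀ x ∈ R₂, x ∉ p ∧ x ∉ q ∧ x ≠ w := fun x hx => by
    simp only [Set.mem_ofPred_eq, not_or] at hR₂
    exact ⟨(hR₂ x hx).1, (hR₂ x hx).2, by rintro rfl; simp [hx] at hwR⟩
  rcases hy with hy | hy
  · exact hasIntDisjPaths_of_detour hp hq hpq hy hsuffix hR₂'
  · exact hasIntDisjPaths_of_detour hq hp (fun x hx hx' => hpq x hx' hx) hy hsuffix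
      fun x hx => ⟨(hR₂' x hx).2.1, (hR₂' x hx).1, (hR₂' x hx).2.2⟩

end IntDisjPaths

section Contract

variable {A : V → V → Prop} {p l₁ l₂ : List V} {a b r v w : V}

/-- Contraction of the arc `w → v` into `v`. Arcs leaving the merged vertex are dropped: they
are irrelevant for paths that end at `v`. -/
def contract (A : V → V → Prop) (w v : V) : V → V → Prop :=
  fun x y => x ≠ w ∧ y ≠ w ∧ (A x y ∨ y = v ∧ A x w)

lemma IsPath.not_mem_of_contract (h : IsPath (contract A w v) p a b) (hwa : w ≠ a) : w ∉ p :=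
  fun hw => h.forall_mem (P := (· ≠ w)) hwa.symm (fun _ _ hxy => hxy.2.1) w hw rfl

lemma IsPath.contract_of_not_mem (h : IsPath A p a b) (hw : w ∉ p) :
    IsPath (contract A w v) p a b :=
  h.mono_of_mem fun _ hx _ hy hxy => ⟨ne_of_mem_of_not_mem hx hw, ne_of_mem_of_not_mem hy hw,
    Or.inl hxy⟩

lemma IsPath.contract_append (h : IsPath A (l₁ ++ w :: l₂) r v) (hwr : w ≠ r) (hwv : w ≠ v) :
    IsPath (contract A w v) (l₁ ++ [v]) r v := by
  obtain ⟨hpre, hsuf, hdisj⟩ := isPath_append_cons_iff.1 h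
  have hvl₁ : v ∉ l₁ := fun hv =>
    hdisj v hv ((List.mem_cons.1 hsuf.end_mem_s5).resolve_left hwv.symm)
  rcases l₁.eq_nil_or_concat' with rfl | ⟨l, x, rfl⟩
  · exact absurd (by simpa [isPath_iff] using hpre.2.1) hwr
  rw [List.append_assoc, List.singleton_append] at hpre ⊢
  obtain ⟨hl, hxw, hl'⟩ := isPath_append_cons_iff.1 hpre
  obtain ⟨hxw, hxw'⟩ := isPath_pair_iff.1 hxw
  have hwl : w ∉ l ++ [x] := by
    simp only [List.mem_append, List.mem_singleton, not_or]
    exact ⟨fun hw => hl' w hw (List.mem_singleton_self w), fun h => hxw' h.symm⟩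
  simp only [List.mem_append, List.mem_singleton, not_or] at hvl₁
  exact isPath_append_cons_iff.2 ⟨hl.contract_of_not_mem hwl, isPath_pair_iff.2
    ⟨⟨hxw', hwv.symm, Or.inr ⟨rfl, hxw⟩⟩, Ne.symm hvl₁.2⟩,
    fun z hz hzv => hvl₁.1 (List.mem_singleton.1 hzv ▸ hz)⟩

lemma IsPath.lift_contract (h : IsPath (contract A w v) p r v) (hrv : r ≠ v) (hwr : w ≠ r)
    (hwv : A w v) :
    ∃ p', IsPath A p' r v ∧ (∀ x ∈ p', x ∈ p ∨ x = w) ∧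
      (w ∈ p' → ∃ l, p = l ++ [v] ∧ p' = l ++ [w, v]) := by
  have hwp := h.not_mem_of_contract hwr
  obtain ⟨l, x, rfl⟩ := h.exists_eq_append_pair hrv
  obtain ⟨hl, hxv, hlv⟩ := isPath_append_cons_iff.1 h
  obtain ⟨⟨hxw, -, hxarc⟩, hxv'⟩ := isPath_pair_iff.1 hxv
  have hA : IsPath A (l ++ [x]) r x := hl.mono_of_mem fun a _ b hb hab =>
    hab.2.2.resolve_right fun hbv => by
      obtain rfl := hbv.1
      simp only [List.mem_append, List.mem_singleton] at hb
      exact hb.elim (hlv b · (List.mem_singleton_self b)) hxv'.symm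
  rcases hxarc with hxv | ⟨-, hxw'⟩
  · refine ⟨l ++ [x, v], isPath_append_cons_iff.2 ⟨hA, isPath_pair_iff.2 ⟨hxv, hxv'⟩, hlv⟩,
      fun y hy => Or.inl hy, fun hw => absurd hw hwp⟩
  · simp only [List.mem_append, List.mem_cons, List.not_mem_nil, or_false, not_or] at hwp hlv
    have hw : IsPath A (l ++ x :: [w]) r w :=
      isPath_append_cons_iff.2 ⟨hA, isPath_pair_iff.2 ⟨hxw', hxw⟩, fun z hz hzw => hwp.1 (by
        simpa [List.mem_singleton.1 hzw] using hz)⟩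
    refine ⟨l ++ [x] ++ w :: [v], isPath_append_cons_iff.2 ⟨by simpa using hw,
      isPath_pair_iff.2 ⟨hwv, hwp.2.2⟩, ?_⟩, by simp; grind, fun _ => ⟨l ++ [x], by simp, by simp⟩⟩
    simp only [List.mem_append, List.mem_singleton]
    grind

end Contract

section Menger

variable {A : V → V → Prop} {P : List V} {r v w : V}

lemma forall_exists_avoiding_contract
    (havoid : ∀ u, u ≠ r → u ≠ v → ∃ p, IsPath A p r v ∧ u ∉ p) (hwr : w ≠ r) (hwv : w ≠ v)
    (hP : IsPath (contract A w v) P r v) :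
    ∀ u, u ≠ r → u ≠ v → ∃ p, IsPath (contract A w v) p r v ∧ u ∉ p := by
  intro u hur huv
  obtain rfl | huw := eq_or_ne u w
  · exact ⟨P, hP, hP.not_mem_of_contract hwr⟩
  obtain ⟨R, hR, huR⟩ := havoid u hur huv
  by_cases hwR : w ∈ R
  · obtain ⟨R₁, R₂, rfl⟩ := List.append_of_mem hwR
    exact ⟨R₁ ++ [v], hR.contract_append hwr hwv, by simp_all⟩
  · exact ⟨R, hR.contract_of_not_mem hwR, huR⟩

theorem hasIntDisjPaths_of_forall_exists_avoiding (hrv : r ≠ v) (hP : IsPath A P r v)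
    (havoid : ∀ u, u ≠ r → u ≠ v → ∃ p, IsPath A p r v ∧ u ∉ p) : HasIntDisjPaths A r v := by
  induction hn : P.length using Nat.strong_induction_on generalizing A P with
  | _ n ih =>
  by_cases hA : A r v
  · exact hasIntDisjPaths_of_adj hA hrv
  obtain ⟨P₀, w, rfl⟩ := hP.exists_eq_append_pair hrv
  obtain ⟨-, hwv, -⟩ := isPath_append_cons_iff.1 hP
  obtain ⟨hwv, hw_ne⟩ := isPath_pair_iff.1 hwv
  have hwr : w ≠ r := by rintro rfl; exact hA hwv
  have hP' : IsPath (contract A w v) (P₀ ++ [v]) r v := hP.contract_append hwr hw_ne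
  obtain ⟨Q₁, Q₂, hQ₁, hQ₂, hQ⟩ := ih _ (by simp [← hn]) hP'
    (forall_exists_avoiding_contract havoid hwr hw_ne hP') rfl
  obtain ⟨Q₁', hQ₁', hsub₁, hw₁⟩ := hQ₁.lift_contract hrv hwr hwv
  obtain ⟨Q₂', hQ₂', hsub₂, hw₂⟩ := hQ₂.lift_contract hrv hwr hwv
  by_cases hw : w ∈ Q₁' ∧ w ∈ Q₂'
  · obtain ⟨l₁, rfl, rfl⟩ := hw₁ hw.1
    obtain ⟨l₂, rfl, rfl⟩ := hw₂ hw.2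
    obtain ⟨R, hR, hwR⟩ := havoid w hwr hw_ne
    refine hasIntDisjPaths_of_reroute hQ₁' hQ₂' (fun x hx₁ hx₂ => ?_) hR hwR
    have hnodup := hQ₁'.nodup
    simp only [List.nodup_append, List.nodup_cons, List.mem_cons] at hnodup
    exact (hQ x (by simp [hx₁]) (by simp [hx₂])).resolve_right
      (hnodup.2.2 x hx₁ v (by simp))
  · exact ⟨Q₁', Q₂', hQ₁', hQ₂', hQ.of_subset_insert hsub₁ hsub₂ (not_and_or.1 hw)⟩

end Menger

/-- Menger-type characterization of diblocks: a vertex `v ≠ r`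
lies outside the diblock of `r` iff some vertex `u ∉ {r,v}` meets all
`r`-`v`-paths; conversely for `v` in the diblock other than `r` and its
out-neighbours, no such cut vertex exists. -/
theorem diblock_menger {V : Type*}
    (A : V → V → Prop) (r : V) (hreach : ∀ v, Reaches A r v)
    (v : V) (hvr : v ≠ r) :
    (v ∉ diblock A r →
      ∃ u, u ≠ r ∧ u ≠ v ∧ ∀ p, IsPath A p r v → u ∈ p) ∧
    (v ∈ diblock A r → ¬ A r v →
      ¬ ∃ u, u ≠ r ∧ u ≠ v ∧ ∀ p, IsPath A p r v → u ∈ p) := by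
  constructor
  · intro hv
    simp only [diblock, Set.mem_union, Set.mem_ofPred_eq, Set.mem_singleton_iff, not_or] at hv
    obtain ⟨⟨hbi, -⟩, hA⟩ := hv
    by_contra hcut
    simp only [not_exists, not_and, not_forall, exists_prop] at hcut
    obtain ⟨P, hP⟩ := hreach v
    exact hbi ((hasIntDisjPaths_of_forall_exists_avoiding hvr.symm hP hcut).biReachable
      hvr.symm hA)
  · rintro hv hA ⟨u, hur, huv, hu⟩
    obtain ⟨p, q, -, hp, hq, hpq⟩ : BiReachable A r v := by simpa [diblock, hvr, hA] using hv
    exact (hpq u (hu p hp) (hu q hq)).elim hur huv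

end CutPaper
end

section
/- Every arc of a digraph H with r-rooted cut decomposition (T̂, {B_x}) is either contained in the subgraph induced by some diblock B_x, or is a back arc going from a diblock B_y to a diblock B_x where x is a proper ancestor of y in T̂. -/
namespace CutPaper

variable {V : Type*}

/-!
Fix an arc `u → v` with `u ∈ B z` and climb the decomposition tree from `z` towards `r`,
keeping `v ∈ B*_c` for the current node `c`. If `u` or `v` lies in `B c` we stop: either both
lie in one diblock, or the arc goes back from `B z` to `B c`. Otherwise `v` already lies in
`B*_b` for the child `b` of `c` on the way to `z`: gluing a path from `c` to `b` that avoids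
`v` with a path from `b` to `u` inside `B*_b` and then the arc gives an access path to `v`
whose last vertex in `B c` is `b`, so `v` lies in the class of `b`. At the bottom, `u ∈ B z` and `v ∈ B*_z`; if `v ∉ B z`, the
same construction shows that `u` is a bottleneck of `B z` with `v ∈ B*_u`, so `v` is an
out-neighbour of the root of `B u`.
-/

section Path

variable {R : V → V → Prop}

lemma isPath_singleton (x : V) : IsPath R [x] x x :=
  ⟨List.isChain_singleton x, rfl, rfl, List.nodup_singleton x⟩

lemma IsPath.concat {p : List V} {x u v : V} (hp : IsPath R p x u) (huv : R u v)
    (hv : v ∉ p) : IsPath R (p ++ [v]) x v := by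
  obtain ⟨hc, hh, hl, hn⟩ := hp
  refine ⟨List.isChain_append.mpr ⟨hc, List.isChain_singleton v, ?_⟩, ?_, List.getLast?_concat,
    List.nodup_append'.mpr ⟨hn, List.nodup_singleton v, by simpa using hv⟩⟩
  · simp_all
  · rw [List.head?_append, hh]; rfl

lemma IsPath.prefix {l₁ l₂ : List V} {w x u : V} (h : IsPath R (l₁ ++ w :: l₂) x u) :
    IsPath R (l₁ ++ [w]) x w := by
  obtain ⟨hc, hh, -, hn⟩ := h
  rw [show l₁ ++ w :: l₂ = (l₁ ++ [w]) ++ l₂ by simp] at hc hh hn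
  refine ⟨(List.isChain_append.mp hc).1, ?_, List.getLast?_concat, (List.nodup_append'.mp hn).1⟩
  cases l₁ <;> simpa using hh

lemma IsPath.suffix {l₁ l₂ : List V} {w x u : V} (h : IsPath R (l₁ ++ w :: l₂) x u) :
    IsPath R (w :: l₂) w u := by
  obtain ⟨hc, -, hl, hn⟩ := h
  refine ⟨(List.isChain_append.mp hc).2.1, rfl, ?_, (List.nodup_append'.mp hn).2.1⟩
  simpa [List.getLast?_append, List.getLast?_cons] using hl

lemma IsPath.glue {s t : List V} {x m u : V} (h₁ : IsPath R (s ++ [m]) x m)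
    (h₂ : IsPath R (m :: t) m u) (hdisj : ∀ w ∈ s, w ∉ m :: t) : IsPath R (s ++ m :: t) x u := by
  obtain ⟨hc₁, hh₁, -, hn₁⟩ := h₁
  obtain ⟨hc₂, -, hl₂, hn₂⟩ := h₂
  refine ⟨List.isChain_append.mpr ⟨(List.isChain_append.mp hc₁).1, hc₂, ?_⟩, ?_, ?_,
    List.nodup_append'.mpr ⟨(List.nodup_append'.mp hn₁).1, hn₂, fun a ha hb => hdisj a ha hb⟩⟩
  · intro a ha b hb
    obtain rfl : m = b := by simpa using hb
    exact (List.isChain_append.mp hc₁).2.2 a ha m (by simp)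
  · cases s <;> simpa using hh₁
  · rw [List.getLast?_append, hl₂]; rfl

lemma exists_first_mem {l : List V} {S : Set V} (h : ∃ a ∈ l, a ∈ S) :
    ∃ α z β, l = α ++ z :: β ∧ z ∈ S ∧ ∀ w ∈ α, w ∉ S := by
  induction l with
  | nil => simp at h
  | cons a t ih =>
    by_cases ha : a ∈ S
    · exact ⟨[], a, t, rfl, ha, by simp⟩
    · obtain ⟨b, hb, hbS⟩ := h
      obtain ⟨α, z, β, rfl, hz, hα⟩ :=
        ih ⟨b, (List.mem_cons.mp hb).resolve_left (fun hba => ha (hba ▸ hbS)), hbS⟩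
      exact ⟨a :: α, z, β, rfl, hz, by simp_all⟩

lemma IsPath.exists_shortcut {s q : List V} {x c u : V} (hs : IsPath R s x c)
    (hq : IsPath R (c :: q) c u) :
    ∃ α z β, (∃ γ, s = α ++ z :: γ) ∧ z ∈ c :: q ∧ (∀ w ∈ β, w ∈ q) ∧
      IsPath R (α ++ z :: β) x u := by
  obtain ⟨α, z, γ, hs_eq, hz, hα⟩ := exists_first_mem (l := s) (S := {w | w ∈ c :: q})
    ⟨c, List.mem_of_getLast? hs.2.2.1, List.mem_cons_self⟩
  obtain ⟨δ, β, hq_eq⟩ := List.append_of_mem hz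
  have hβ : ∀ w ∈ β, w ∈ q := by
    cases δ with
    | nil =>
      simp only [List.nil_append, List.cons.injEq] at hq_eq
      exact hq_eq.2 ▸ fun _ => id
    | cons e δ =>
      simp only [List.cons_append, List.cons.injEq] at hq_eq
      exact hq_eq.2 ▸ fun _ hw => List.mem_append_right _ (.tail _ hw)
  rw [hq_eq] at hq hα
  exact ⟨α, z, β, ⟨γ, hs_eq⟩, hz, hβ,
    (hs_eq ▸ hs).prefix.glue hq.suffix (fun w hw hwz => hα w hw (by simp_all))⟩

end Path

section Induced

variable {A : V → V → Prop} {S S' : Set V} {p : List V} {x y : V}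

lemma IsPath.mem_of_asub (hp : IsPath (Asub A S) p x y) (hx : x ∈ S) : ∀ z ∈ p, z ∈ S := by
  obtain ⟨hc, hh, -, -⟩ := hp
  induction p generalizing x with
  | nil => simp
  | cons a t ih =>
    obtain rfl : a = x := by simpa using hh
    cases t with
    | nil => simpa using hx
    | cons b t =>
      have hab := List.isChain_cons_cons.mp hc
      intro z hz
      rcases List.mem_cons.mp hz with rfl | hz
      · exact hx
      · exact ih hab.1.2.2 hab.2 rfl z hz

lemma IsPath.asub_of_mem (hp : IsPath (Asub A S) p x y) (hS' : ∀ z ∈ p, z ∈ S') :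
    IsPath (Asub A S') p x y := by
  refine ⟨?_, hp.2⟩
  have hc : List.IsChain _ p := List.IsChain.iff_mem.mp hp.1
  exact hc.imp fun a b hab => ⟨hab.2.2.1, hS' a hab.1, hS' b hab.2.1⟩

lemma IsPath.asub_mono (hp : IsPath (Asub A S) p x y) (hSS' : S ⊆ S') :
    IsPath (Asub A S') p x y :=
  ⟨List.IsChain.imp (fun _ _ hab => ⟨hab.1, hSS' hab.2.1, hSS' hab.2.2⟩) hp.1, hp.2⟩

end Induced

section LastTouch

variable {B : Set V} {p : List V} {a b : V}

lemma lastTouch_concat_self (l : List V) (hb : b ∈ B) : LastTouch B (l ++ [b]) b :=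
  ⟨l, [], rfl, hb, by simp⟩

lemma LastTouch.append (h : LastTouch B p b) {l : List V} (hl : ∀ y ∈ l, y ∉ B) :
    LastTouch B (p ++ l) b := by
  obtain ⟨p₁, p₂, rfl, hb, hp₂⟩ := h
  exact ⟨p₁, p₂ ++ l, by simp, hb, fun y hy => (List.mem_append.mp hy).elim (hp₂ y) (hl y)⟩

lemma LastTouch.unique (ha : LastTouch B p a) (hb : LastTouch B p b) : a = b := by
  obtain ⟨p₁, p₂, rfl, haB, hp₂⟩ := ha
  obtain ⟨q₁, q₂, heq, hbB, hq₂⟩ := hb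
  rcases List.append_eq_append_iff.mp heq with ⟨as, -, has⟩ | ⟨bs, -, hbs⟩
  · cases as with
    | nil =>
      simp only [List.nil_append, List.cons.injEq] at has
      exact has.1
    | cons e as => simp only [List.cons_append, List.cons.injEq] at has; simp_all
  · cases bs with
    | nil =>
      simp only [List.nil_append, List.cons.injEq] at hbs
      exact hbs.1.symm
    | cons e bs => simp only [List.cons_append, List.cons.injEq] at hbs; simp_all

end LastTouch

def InDiblock (d : PreDecomp V) (u v : V) : Prop :=
  ∃ x ∈ d.N, u ∈ d.B x ∧ v ∈ d.B x

def IsBackArc (d : PreDecomp V) (r u v : V) : Prop :=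
  ∃ x ∈ d.N, ∃ y ∈ d.N, u ∈ d.B y ∧ v ∈ d.B x ∧ Anc d r x y ∧ x ≠ y

section Bstar

variable {r : V} {d : PreDecomp V}

lemma B_subset_Bstar {x : V} (hx : x ∈ d.N) : d.B x ⊆ Bstar d r x :=
  fun _ hv => ⟨x, hx, Relation.ReflTransGen.refl, hv⟩

lemma Bstar_subset_of_anc {x y : V} (hxy : Anc d r x y) : Bstar d r y ⊆ Bstar d r x := by
  rintro v ⟨z, hz, hyz, hv⟩
  exact ⟨z, hz, hyz.trans hxy, hv⟩

end Bstar

namespace IsCutDecomp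

variable {A : V → V → Prop} {r : V} {d : PreDecomp V} {x c u v w : V}

lemma mem_B_self (h : IsCutDecomp A r d) (hx : x ∈ d.N) : x ∈ d.B x := by
  rw [h.diblock_eq x hx]
  exact Or.inl (Or.inr rfl)

lemma self_mem_Bstar (h : IsCutDecomp A r d) (hx : x ∈ d.N) : x ∈ Bstar d r x :=
  B_subset_Bstar hx (h.mem_B_self hx)

lemma child_mem_B (h : IsCutDecomp A r d) (hx : x ∈ d.N) (hC : IsChild d r c x) : c ∈ d.B x :=
  ((h.child_iff x hx c).mp hC).1

lemma eq_of_mem_Bstar_child (h : IsCutDecomp A r d) (hx : x ∈ d.N) (hC : IsChild d r c x)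
    (hw : w ∈ Bstar d r c) (hwB : w ∈ d.B x) : w = c := by
  rw [h.child_part x hx c hC] at hw
  exact hw.resolve_right fun hwP => hwP.2.1 hwB

lemma mem_partClass (h : IsCutDecomp A r d) (hx : x ∈ d.N) (hC : IsChild d r c x)
    (hv : v ∈ Bstar d r c) (hvB : v ∉ d.B x) : v ∈ PartClass A d r x c := by
  rw [h.child_part x hx c hC] at hv
  exact hv.resolve_left fun hvc => hvB (hvc ▸ h.child_mem_B hx hC)

lemma exists_child_mem_partClass (h : IsCutDecomp A r d) (hx : x ∈ d.N)
    (hv : v ∈ Bstar d r x) (hvB : v ∉ d.B x) : ∃ c, IsChild d r c x ∧ v ∈ PartClass A d r x c := by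
  obtain ⟨z, hz, hxz, hvz⟩ := hv
  rcases Relation.ReflTransGen.cases_tail hxz with rfl | ⟨c, hcz, hC⟩
  · exact absurd hvz hvB
  · exact ⟨c, hC, h.mem_partClass hx hC ⟨z, hz, hcz, hvz⟩ hvB⟩

lemma mem_Bstar_child_of_lastTouch (h : IsCutDecomp A r d) (hx : x ∈ d.N) {p : List V}
    (hp : IsPath (Asub A (Bstar d r x)) p x v) (hvB : v ∉ d.B x) (hc : LastTouch (d.B x) p c) :
    IsChild d r c x ∧ v ∈ Bstar d r c := by
  have hv : v ∈ Bstar d r x :=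
    hp.mem_of_asub (h.self_mem_Bstar hx) v (List.mem_of_getLast? hp.2.2.1)
  obtain ⟨y, hy, hvy⟩ := h.exists_child_mem_partClass hx hv hvB
  obtain rfl := (hvy.2.2 p hp).unique hc
  exact ⟨hy, h.child_part x hx y hy ▸ Set.mem_insert_of_mem y hvy⟩

lemma exists_path_avoiding (h : IsCutDecomp A r d) (hx : x ∈ d.N) (hu : u ∈ d.B x)
    (hv : v ∉ d.B x) : ∃ p, IsPath (Asub A (Bstar d r x)) p x u ∧ v ∉ p := by
  have hvx : v ≠ x := by rintro rfl; exact hv (h.mem_B_self hx)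
  have hvu : v ≠ u := fun hvu => hv (hvu ▸ hu)
  have hu' := hu
  rw [h.diblock_eq x hx] at hu'
  rcases hu' with (⟨p, q, -, hp, hq, hpq⟩ | rfl) | hxu
  · by_cases hvp : v ∈ p
    · exact ⟨q, hq, fun hvq => (hpq v hvp hvq).elim hvx hvu⟩
    · exact ⟨p, hp, hvp⟩
  · exact ⟨[u], isPath_singleton u, by simpa using hvu⟩
  · by_cases hux : u = x
    · subst hux
      exact ⟨[u], isPath_singleton u, by simpa using hvu⟩
    · exact ⟨[x, u], ⟨List.isChain_pair.mpr hxu, rfl, rfl, by simp [Ne.symm hux]⟩,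
        by simp [hvx, hvu]⟩

lemma mem_Bstar_of_mem_tail (h : IsCutDecomp A r d) (hx : x ∈ d.N) {p₁ p₂ : List V}
    (hp : IsPath (Asub A (Bstar d r x)) (p₁ ++ c :: p₂) x w) (hcB : c ∈ d.B x)
    (hp₂ : ∀ y ∈ p₂, y ∉ d.B x) : ∀ z ∈ p₂, z ∈ Bstar d r c := by
  intro z hz
  obtain ⟨γ, δ, rfl⟩ := List.append_of_mem hz
  rw [show p₁ ++ c :: (γ ++ z :: δ) = (p₁ ++ c :: γ) ++ z :: δ by simp] at hp
  have hlast : LastTouch (d.B x) ((p₁ ++ c :: γ) ++ [z]) c := by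
    rw [show (p₁ ++ c :: γ) ++ [z] = (p₁ ++ [c]) ++ (γ ++ [z]) by simp]
    exact (lastTouch_concat_self p₁ hcB).append fun y hy => hp₂ y (by simp at hy ⊢; tauto)
  exact (h.mem_Bstar_child_of_lastTouch hx hp.prefix (hp₂ z hz) hlast).2

lemma reaches_of_mem_Bstar (h : IsCutDecomp A r d) (hreach : ∀ v, Reaches A r v)
    (hx : x ∈ d.N) : ∀ w ∈ Bstar d r x, Reaches (Asub A (Bstar d r x)) x w := by
  induction h.tree x hx using Relation.ReflTransGen.head_induction_on with
  | refl =>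
    intro w _
    obtain ⟨p, hc, hp⟩ := hreach w
    exact ⟨p, hc.imp fun _ _ hab => ⟨hab, by simp [h.cover]⟩, hp⟩
  | @head a c hstep _ ih =>
    intro w hw
    have hC : IsChild d r a c := hstep
    have hc : c ∈ d.N := hstep.2.2 ▸ h.parent_mem a hstep.1 hstep.2.1
    by_cases hwa : w = a
    · exact hwa ▸ ⟨[w], isPath_singleton w⟩
    have hwP : w ∈ PartClass A d r c a := by
      rw [h.child_part c hc a hC] at hw
      exact hw.resolve_left hwa
    obtain ⟨p, hp⟩ := ih hc w (Bstar_subset_of_anc (.single hstep) hw)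
    obtain ⟨p₁, p₂, rfl, haB, hp₂⟩ := hwP.2.2 p hp
    have hsub := h.mem_Bstar_of_mem_tail hc hp haB hp₂
    refine ⟨a :: p₂, hp.suffix.asub_of_mem fun z hz => ?_⟩
    rcases List.mem_cons.mp hz with rfl | hz
    · exact h.self_mem_Bstar hstep.1
    · exact hsub z hz

lemma mem_Bstar_child_of_arc (h : IsCutDecomp A r d) (hreach : ∀ v, Reaches A r v)
    (hx : x ∈ d.N) (hC : IsChild d r c x) (hu : u ∈ Bstar d r c) (hv : v ∈ Bstar d r x)
    (hvB : v ∉ d.B x) (huv : A u v) : v ∈ Bstar d r c := by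
  by_contra hvc
  have hc : c ∈ d.N := hC.1
  have hcx : Bstar d r c ⊆ Bstar d r x := Bstar_subset_of_anc (.single hC)
  obtain ⟨s, hs, hvs⟩ := h.exists_path_avoiding hx (h.child_mem_B hx hC) hvB
  obtain ⟨q, hq⟩ := h.reaches_of_mem_Bstar hreach hc u hu
  obtain ⟨q, rfl⟩ : ∃ q', q = c :: q' := by
    obtain ⟨-, hh, -⟩ := hq
    cases q <;> simp_all
  have hqc : ∀ w ∈ c :: q, w ∈ Bstar d r c := hq.mem_of_asub (h.self_mem_Bstar hc)
  have hqB : ∀ w ∈ q, w ∉ d.B x := fun w hw hwB => (List.nodup_cons.mp hq.2.2.2).1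
    (h.eq_of_mem_Bstar_child hx hC (hqc w (.tail c hw)) hwB ▸ hw)
  obtain ⟨α, z, β, ⟨γ, rfl⟩, hz, hβ, hpath⟩ := hs.exists_shortcut (hq.asub_mono hcx)
  have hlast : LastTouch (d.B x) (α ++ [z]) c := by
    by_cases hzB : z ∈ d.B x
    · obtain rfl := h.eq_of_mem_Bstar_child hx hC (hqc z hz) hzB
      exact lastTouch_concat_self α hzB
    · exact (h.mem_partClass hx hC (hqc z hz) hzB).2.2 _ hs.prefix
  have hvpath : v ∉ α ++ z :: β := by
    simp only [List.mem_append, List.mem_cons, not_or]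
    exact ⟨fun hvα => hvs (by simp [hvα]),
      fun hvz => hvc (hvz ▸ hqc z hz), fun hvβ => hvc (hqc v (.tail c (hβ v hvβ)))⟩
  have hlast' : LastTouch (d.B x) ((α ++ z :: β) ++ [v]) c := by
    rw [show (α ++ z :: β) ++ [v] = (α ++ [z]) ++ (β ++ [v]) by simp]
    refine hlast.append ?_
    simp only [List.mem_append, List.mem_singleton]
    rintro y (hy | rfl)
    exacts [hqB y (hβ y hy), hvB]
  exact hvc (h.mem_Bstar_child_of_lastTouch hx (hpath.concat ⟨huv, hcx hu, hv⟩ hvpath) hvB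
    hlast').2

lemma inDiblock_of_mem_B (h : IsCutDecomp A r d) (hx : x ∈ d.N) (hu : u ∈ d.B x)
    (hv : v ∈ Bstar d r x) (huv : A u v) : InDiblock d u v := by
  by_cases hvB : v ∈ d.B x
  · exact ⟨x, hx, hu, hvB⟩
  obtain ⟨s, hs, hvs⟩ := h.exists_path_avoiding hx hu hvB
  have hlast : LastTouch (d.B x) (s ++ [v]) u := by
    obtain ⟨s', rfl⟩ := List.getLast?_eq_some_iff.mp hs.2.2.1
    exact (lastTouch_concat_self s' hu).append (l := [v]) (by simpa using hvB)
  obtain ⟨hC, hvu⟩ := h.mem_Bstar_child_of_lastTouch hx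
    (hs.concat ⟨huv, B_subset_Bstar hx hu, hv⟩ hvs) hvB hlast
  have hu' : u ∈ d.N := hC.1
  refine ⟨u, hu', h.mem_B_self hu', ?_⟩
  rw [h.diblock_eq u hu']
  exact Or.inr ⟨huv, h.self_mem_Bstar hu', hvu⟩

lemma inDiblock_or_isBackArc (h : IsCutDecomp A r d) (hreach : ∀ v, Reaches A r v)
    {z : V} (huv : A u v) (hz : z ∈ d.N) (hu : u ∈ d.B z) (hzc : Anc d r c z)
    (hv : v ∈ Bstar d r c) : InDiblock d u v ∨ IsBackArc d r u v := by
  induction hzc with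
  | refl => exact .inl (h.inDiblock_of_mem_B hz hu hv huv)
  | @tail b c hzb hbc ih =>
    have hc : c ∈ d.N := hbc.2.2 ▸ h.parent_mem b hbc.1 hbc.2.1
    by_cases huB : u ∈ d.B c
    · exact .inl (h.inDiblock_of_mem_B hc huB hv huv)
    by_cases hvB : v ∈ d.B c
    · exact .inr ⟨c, hc, z, hz, hu, hvB, hzb.tail hbc, fun hcz => huB (hcz ▸ hu)⟩
    exact ih (h.mem_Bstar_child_of_arc hreach hc hbc ⟨z, hz, hzb, hu⟩ hv hvB huv)

end IsCutDecomp

/-- every arc either lies inside a single diblock, or is a back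
arc from a diblock `B y` to a diblock `B x` where `x` is a proper ancestor of
`y` in the decomposition tree. -/
theorem cutDecomp_arc_classification {V : Type*}
    (A : V → V → Prop) (r : V) (hreach : ∀ v, Reaches A r v)
    (d : PreDecomp V) (h : IsCutDecomp A r d) :
    ∀ u v, A u v →
      (∃ x ∈ d.N, u ∈ d.B x ∧ v ∈ d.B x) ∨
      (∃ x ∈ d.N, ∃ y ∈ d.N, u ∈ d.B y ∧ v ∈ d.B x ∧
        Anc d r x y ∧ x ≠ y) := by
  intro u v huv
  obtain ⟨z, hz, -, hu⟩ : u ∈ Bstar d r r := h.cover ▸ Set.mem_univ u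
  exact h.inDiblock_or_isBackArc hreach huv hz hu (h.tree z hz) (h.cover ▸ Set.mem_univ v)

end CutPaper
end
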